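/- Suppose for every z ∈ Z the loss F(·, z) takes values in [0,1], is L-Lipschitz and β-smooth (no convexity assumed), and run SGD with constant step size 0 < α ≤ c/T for T steps on the neighbouring datasets S and S'. Then SeWA is uniformly stable with ε_gen ≤ ((1 + 1/(cβ))/(n−1)) · (2 c s L² (1 + k e^{cβ}) k^{−1})^{k/(cβ+k)} · T^{cβ/(cβ+k)}; that is, for every example z, E_I E_m |F(w̄_T(I,m), z) − F(w̄_T'(I,m), z)| is bounded by this quantity. -/

import Mathlib

open Finset in
lemma sewa_mask_sum_one {k : ℕ} (s : Fin k → ℝ) :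
    ∑ m : Fin k → Bool, (∏ i, if m i then s i else 1 - s i) = 1 := by
  rw [← Fintype.prod_sum (fun i (b : Bool) => if b then s i else 1 - s i)]
  simp

open Finset in
lemma sewa_mask_marginal {k : ℕ} (s : Fin k → ℝ) (i₀ : Fin k) :
    ∑ m : Fin k → Bool,
      (∏ i, if m i then s i else 1 - s i) * (if m i₀ then (1:ℝ) else 0) = s i₀ := by
  have h : ∀ m : Fin k → Bool,
      (∏ i, if m i then s i else 1 - s i) * (if m i₀ then (1:ℝ) else 0)
        = ∏ i, ((if m i then s i else 1 - s i) *
            (if i = i₀ then (if m i then (1:ℝ) else 0) else 1)) := by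
    intro m
    rw [Finset.prod_mul_distrib]
    congr 1
    simp [Finset.prod_ite_eq']
  rw [Finset.sum_congr rfl fun m _ => h m,
    ← Fintype.prod_sum (fun i (b : Bool) =>
      (if b then s i else 1 - s i) * (if i = i₀ then (if b then (1:ℝ) else 0) else 1))]
  rw [Finset.prod_eq_single i₀]
  · simp
  · intro i _ hi; simp [hi]
  · simp

lemma sewa_sum_eval {ι κ : Type*} [Fintype ι] [Fintype κ] [DecidableEq ι] [DecidableEq κ]
    (τ : ι) (x : κ) :
    ∑ I : ι → κ, (if I τ = x then (1:ℝ) else 0)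
      = (Fintype.card κ : ℝ) ^ (Fintype.card ι - 1) := by
  rw [← Equiv.sum_comp (Equiv.funSplitAt τ κ).symm
    (fun I : ι → κ => if I τ = x then (1:ℝ) else 0)]
  have hval : ∀ p : κ × ({ j // j ≠ τ } → κ), ((Equiv.funSplitAt τ κ).symm p) τ = p.1 := by
    intro p; simp [Equiv.funSplitAt, Equiv.piSplitAt]
  simp only [hval]
  rw [Fintype.sum_prod_type]
  have h2 : ∀ a : κ, (∑ _g : { j // j ≠ τ } → κ, if a = x then (1:ℝ) else 0)
      = if a = x then (Fintype.card ({ j // j ≠ τ } → κ) : ℝ) else 0 := by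
    intro a; split_ifs <;> simp [Finset.sum_const]
  rw [Finset.sum_congr rfl fun a _ => h2 a]
  rw [Finset.sum_ite_eq' Finset.univ x]
  have h3 : Fintype.card { j // j ≠ τ } = Fintype.card ι - 1 := Set.card_ne_eq τ
  simp [Fintype.card_fun, h3]

lemma sewa_sum_range_ite (x : ℝ) (N : ℕ) :
    ∑ t ∈ Finset.range (N + 1), (if 2 ≤ t then x else 0) = ((N - 1 : ℕ) : ℝ) * x := by
  induction N with
  | zero => simp
  | succ N ih =>
    rw [Finset.sum_range_succ, ih]
    rcases Nat.lt_or_ge N 1 with h | h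
    · interval_cases N <;> simp
    · rw [if_pos (by omega)]
      have e1 : (N + 1 - 1 : ℕ) = N := by omega
      rw [e1, Nat.cast_sub h]
      push_cast; ring

set_option maxHeartbeats 1600000

/-- **Theorem 4.4 (uniform stability of SeWA, non-convex case).** For a loss with values in
`[0,1]` that is `L`-Lipschitz and `β`-smooth (no convexity), running SGD with constant step
size `0 < α ≤ c/T` for `T` steps on neighbouring datasets, SeWA is uniformly stable with
`ε ≤ ((1 + 1/(cβ))/(n-1)) (2 c s L² (1 + k e^{cβ}) / k)^{k/(cβ+k)} T^{cβ/(cβ+k)}`. -/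
theorem sewa_stability_nonconvex
    {E : Type*} [NormedAddCommGroup E] [InnerProductSpace ℝ E]
    {Z : Type*} (F : E → Z → ℝ) (gradF : E → Z → E)
    (L β c : ℝ) (hL : 0 < L) (hβ : 0 < β) (hc : 0 < c)
    (hdiff : ∀ (z : Z) (x : E), HasFDerivAt (fun u => F u z) ((innerSL ℝ) (gradF x z)) x)
    (hrange : ∀ (u : E) (z : Z), F u z ∈ Set.Icc (0 : ℝ) 1)
    (hLip : ∀ (z : Z) (u v : E), |F u z - F v z| ≤ L * ‖u - v‖)
    (hsmooth : ∀ (z : Z) (u v : E), ‖gradF u z - gradF v z‖ ≤ β * ‖u - v‖)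
    (n : ℕ) (hn : 2 ≤ n) (S S' : Fin n → Z) (j : Fin n)
    (hSS' : ∀ i, i ≠ j → S i = S' i)
    (T k : ℕ) (hk : 1 ≤ k) (hkT : k ≤ T)
    (α : ℝ) (hα : 0 < α) (hα2 : α ≤ c / T)
    (w0 : E) (w w' : (Fin (T + 1) → Fin n) → ℕ → E)
    (hw1 : ∀ I, w I 1 = w0) (hw1' : ∀ I, w' I 1 = w0)
    (hwrec : ∀ I, ∀ t, ∀ (h2 : 2 ≤ t) (hT' : t ≤ T),
      w I t = w I (t - 1) - α • gradF (w I (t - 1)) (S (I ⟨t, by omega⟩)))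
    (hwrec' : ∀ I, ∀ t, ∀ (h2 : 2 ≤ t) (hT' : t ≤ T),
      w' I t = w' I (t - 1) - α • gradF (w' I (t - 1)) (S' (I ⟨t, by omega⟩)))
    (s : Fin k → ℝ) (hs : ∀ i, s i ∈ Set.Icc (0 : ℝ) 1)
    (z : Z) :
    ((1 : ℝ) / (n : ℝ) ^ (T + 1)) *
      ∑ I : Fin (T + 1) → Fin n,
        ∑ m : Fin k → Bool,
          (∏ i, if m i then s i else 1 - s i) *
            |F (((1 : ℝ) / k) • ∑ i : Fin k, (if m i then (1 : ℝ) else 0) • w I (T - k + 1 + i)) z -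
              F (((1 : ℝ) / k) • ∑ i : Fin k, (if m i then (1 : ℝ) else 0) • w' I (T - k + 1 + i)) z|
      ≤ ((1 + 1 / (c * β)) / ((n : ℝ) - 1)) *
          (2 * c * (⨆ i, s i) * L ^ 2 * (1 + (k : ℝ) * Real.exp (c * β)) / k) ^
            ((k : ℝ) / (c * β + k)) *
          (T : ℝ) ^ (c * β / (c * β + k)) := by
  -- ## Basic facts
  have hT1 : 1 ≤ T := le_trans hk hkT
  have hT1R : (1:ℝ) ≤ T := by exact_mod_cast hT1
  have hTpos : (0:ℝ) < T := lt_of_lt_of_le zero_lt_one hT1R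
  have hkpos : (0:ℝ) < k := by exact_mod_cast hk
  have hnR : (2:ℝ) ≤ n := by exact_mod_cast hn
  have hnpos : (0:ℝ) < n := by linarith
  have hαT : α * T ≤ c := by
    rw [← le_div_iff₀ hTpos]; exact hα2
  have hcβ : 0 < c * β := mul_pos hc hβ
  -- gradient norm bound
  have hgrad : ∀ (zz : Z) (u : E), ‖gradF u zz‖ ≤ L := by
    intro zz u
    have hlip : LipschitzWith L.toNNReal (fun u => F u zz) := by
      apply LipschitzWith.of_dist_le_mul
      intro a b
      rw [Real.dist_eq, dist_eq_norm, Real.coe_toNNReal L hL.le]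
      exact hLip zz a b
    have := (hdiff zz u).le_of_lipschitz hlip
    rwa [innerSL_apply_norm, Real.coe_toNNReal L hL.le] at this
  -- supremum facts
  have i₀ : Fin k := ⟨0, hk⟩
  have hbdd : BddAbove (Set.range s) := (Set.finite_range s).bddAbove
  have hsmax_le : ∀ i, s i ≤ ⨆ i, s i := fun i => le_ciSup hbdd i
  have hsmax0 : (0:ℝ) ≤ ⨆ i, s i := le_trans (hs i₀).1 (hsmax_le i₀)
  set smax : ℝ := ⨆ i, s i with hsmaxdef
  -- ## Counting function
  set NN : (Fin (T + 1) → Fin n) → ℕ → ℕ := fun I t =>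
    ∑ τ : Fin (T + 1), if 2 ≤ (τ:ℕ) ∧ (τ:ℕ) ≤ t ∧ I τ = j then 1 else 0 with hNNdef
  have hNN1 : ∀ I, NN I 1 = 0 := by
    intro I
    apply Finset.sum_eq_zero
    intro τ _
    rw [if_neg]; omega
  have hNNstep : ∀ I t (h2 : 2 ≤ t) (hT' : t ≤ T),
      NN I t = NN I (t - 1) + (if I ⟨t, by omega⟩ = j then 1 else 0) := by
    intro I t h2 hT'
    have hsplit : ∀ τ : Fin (T + 1),
        (if 2 ≤ (τ:ℕ) ∧ (τ:ℕ) ≤ t ∧ I τ = j then (1:ℕ) else 0)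
          = (if 2 ≤ (τ:ℕ) ∧ (τ:ℕ) ≤ t - 1 ∧ I τ = j then 1 else 0)
            + (if τ = (⟨t, by omega⟩ : Fin (T + 1)) then (if I τ = j then 1 else 0) else 0) := by
      intro τ
      by_cases hvt : (τ:ℕ) = t
      · have hτ : τ = (⟨t, by omega⟩ : Fin (T + 1)) := Fin.ext hvt
        rw [if_pos hτ]
        by_cases hIj : I τ = j <;> simp [hIj, hvt] <;> split_ifs <;> omega
      · rw [if_neg (show ¬(τ = (⟨t, by omega⟩ : Fin (T + 1))) from
            fun h => hvt (by rw [h]))]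
        by_cases hIj : I τ = j <;> simp [hIj] <;> split_ifs <;> omega
    simp only [hNNdef]
    rw [Finset.sum_congr rfl fun τ _ => hsplit τ, Finset.sum_add_distrib]
    congr 1
    rw [Finset.sum_ite_eq' Finset.univ]
    simp
  have hNNmono : ∀ I t t', t ≤ t' → NN I t ≤ NN I t' := by
    intro I t t' h
    apply Finset.sum_le_sum
    intro τ _
    split_ifs <;> omega
  -- ## Growth factor bound
  have hone_le : (1:ℝ) ≤ 1 + α * β := by nlinarith
  have hgeo : ∀ t : ℕ, t ≤ T → (1 + α * β) ^ t ≤ Real.exp (c * β) := by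
    intro t ht
    have htT : (t:ℝ) ≤ T := by exact_mod_cast ht
    have h5 : α * (t:ℝ) ≤ c :=
      le_trans (mul_le_mul_of_nonneg_left htT hα.le) hαT
    have h1 : (1 + α * β) ≤ Real.exp (α * β) := by
      have := Real.add_one_le_exp (α * β); linarith
    calc (1 + α * β) ^ t ≤ Real.exp (α * β) ^ t := by
          apply pow_le_pow_left₀ (by positivity) h1
      _ = Real.exp ((t:ℝ) * (α * β)) := by rw [← Real.exp_nat_mul]
      _ ≤ Real.exp (c * β) := by
          apply Real.exp_le_exp.2
          nlinarith [mul_le_mul_of_nonneg_right h5 hβ.le]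
  -- ## Key induction on trajectories
  have key : ∀ I t, 1 ≤ t → t ≤ T →
      ‖w I t - w' I t‖ ≤ 2 * α * L * (1 + α * β) ^ (t - 1) * (NN I t : ℝ) := by
    intro I t ht
    induction t, ht using Nat.le_induction with
    | base =>
      intro _
      rw [hw1, hw1', hNN1]
      simp
    | succ t ht ih =>
      intro htT
      have ih' := ih (by omega)
      have hrec := hwrec I (t + 1) (by omega) htT
      have hrec' := hwrec' I (t + 1) (by omega) htT
      simp only [Nat.add_sub_cancel] at hrec hrec'
      have hstep := hNNstep I (t + 1) (by omega) htT
      simp only [Nat.add_sub_cancel] at hstep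
      have hNt : (0:ℝ) ≤ (NN I t : ℝ) := Nat.cast_nonneg _
      have hpow1 : (1:ℝ) ≤ (1 + α * β) ^ t := by
        calc (1:ℝ) = 1 ^ t := (one_pow t).symm
          _ ≤ (1 + α * β) ^ t := pow_le_pow_left₀ zero_le_one hone_le t
      have hpowmono : (1 + α * β) ^ (t - 1) ≤ (1 + α * β) ^ t :=
        pow_le_pow_right₀ hone_le (Nat.sub_le t 1)
      have step_bound : ∀ (a b x y : E), ‖(a - x) - (b - y)‖ ≤ ‖a - b‖ + ‖x‖ + ‖y‖ := by
        intro a b x y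
        have he : (a - x) - (b - y) = ((a - b) - x) + y := by abel
        rw [he]
        calc ‖((a - b) - x) + y‖ ≤ ‖(a - b) - x‖ + ‖y‖ := norm_add_le _ _
          _ ≤ ‖a - b‖ + ‖x‖ + ‖y‖ := by
              have := norm_sub_le (a - b) x; linarith
      simp only [Nat.add_sub_cancel]
      by_cases hj : I (⟨t + 1, by omega⟩ : Fin (T + 1)) = j
      · rw [if_pos hj] at hstep
        have hb1' : ∀ (a b : E) (z1 z2 : Z),
            ‖(a - α • gradF a z1) - (b - α • gradF b z2)‖ ≤ ‖a - b‖ + 2 * (α * L) := by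
          intro a b z1 z2
          refine le_trans (step_bound a b _ _) ?_
          have g1 : ‖α • gradF a z1‖ ≤ α * L := by
            rw [norm_smul, Real.norm_eq_abs, abs_of_pos hα]
            exact mul_le_mul_of_nonneg_left (hgrad _ _) hα.le
          have g2 : ‖α • gradF b z2‖ ≤ α * L := by
            rw [norm_smul, Real.norm_eq_abs, abs_of_pos hα]
            exact mul_le_mul_of_nonneg_left (hgrad _ _) hα.le
          linarith
        have hb1 : ‖w I (t + 1) - w' I (t + 1)‖ ≤ ‖w I t - w' I t‖ + 2 * (α * L) := by
          rw [hrec, hrec']; exact hb1' _ _ _ _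
        have hA : 2*α*L*(1+α*β)^(t-1)*(NN I t:ℝ) ≤ 2*α*L*(1+α*β)^t*(NN I t:ℝ) := by
          apply mul_le_mul_of_nonneg_right _ hNt
          exact mul_le_mul_of_nonneg_left hpowmono (by positivity)
        have hB : 2*(α*L) ≤ 2*α*L*(1+α*β)^t := by
          have := mul_le_mul_of_nonneg_left hpow1 (show (0:ℝ) ≤ 2*α*L by positivity)
          linarith
        rw [hstep]
        push_cast
        calc ‖w I (t+1) - w' I (t+1)‖ ≤ ‖w I t - w' I t‖ + 2*(α*L) := hb1
          _ ≤ 2*α*L*(1+α*β)^t*(NN I t:ℝ) + 2*α*L*(1+α*β)^t := by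
              linarith [le_trans ih' hA]
          _ = 2*α*L*(1+α*β)^t*((NN I t:ℝ) + 1) := by ring
      · rw [if_neg hj, Nat.add_zero] at hstep
        have hz : S (I (⟨t + 1, by omega⟩ : Fin (T + 1)))
            = S' (I (⟨t + 1, by omega⟩ : Fin (T + 1))) := hSS' _ hj
        rw [hz] at hrec
        have hb2' : ∀ (a b : E) (zz : Z),
            ‖(a - α • gradF a zz) - (b - α • gradF b zz)‖ ≤ (1 + α*β) * ‖a - b‖ := by
          intro a b zz
          have he : (a - α • gradF a zz) - (b - α • gradF b zz)
              = (a - b) - α • (gradF a zz - gradF b zz) := by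
            rw [smul_sub]; abel
          rw [he]
          calc ‖(a-b) - α • (gradF a zz - gradF b zz)‖
              ≤ ‖a-b‖ + ‖α • (gradF a zz - gradF b zz)‖ := norm_sub_le _ _
            _ ≤ ‖a-b‖ + α * (β * ‖a - b‖) := by
                rw [norm_smul, Real.norm_eq_abs, abs_of_pos hα]
                have := hsmooth zz a b
                nlinarith
            _ = (1 + α*β) * ‖a-b‖ := by ring
        have hb2 : ‖w I (t + 1) - w' I (t + 1)‖ ≤ (1 + α*β) * ‖w I t - w' I t‖ := by
          rw [hrec, hrec']; exact hb2' _ _ _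
        have hts : t - 1 + 1 = t := Nat.sub_add_cancel ht
        rw [hstep]
        calc ‖w I (t+1) - w' I (t+1)‖ ≤ (1 + α*β) * ‖w I t - w' I t‖ := hb2
          _ ≤ (1 + α*β) * (2*α*L*(1+α*β)^(t-1)*(NN I t:ℝ)) := by
              apply mul_le_mul_of_nonneg_left ih' (by positivity)
          _ = 2*α*L*(1+α*β)^t*(NN I t:ℝ) := by
              have hpw : (1+α*β) * (1+α*β)^(t-1) = (1+α*β)^t := by
                conv_rhs => rw [← hts]
                rw [pow_succ]; ring
              rw [← hpw]; ring
  -- ## Uniform deviation bound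
  have hNNT : ∀ I t, 1 ≤ t → t ≤ T →
      ‖w I t - w' I t‖ ≤ 2*α*L*Real.exp (c*β) * (NN I T : ℝ) := by
    intro I t h1 h2
    have h3 := key I t h1 h2
    have h4 : (1+α*β)^(t-1) ≤ Real.exp (c*β) := hgeo (t-1) (by omega)
    have h5 : (NN I t : ℝ) ≤ (NN I T : ℝ) := Nat.cast_le.2 (hNNmono I t T h2)
    have h6 : (0:ℝ) ≤ (NN I t : ℝ) := Nat.cast_nonneg _
    calc ‖w I t - w' I t‖ ≤ 2*α*L*(1+α*β)^(t-1)*(NN I t:ℝ) := h3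
      _ ≤ 2*α*L*Real.exp (c*β)*(NN I t:ℝ) := by
          apply mul_le_mul_of_nonneg_right _ h6
          exact mul_le_mul_of_nonneg_left h4 (by positivity)
      _ ≤ 2*α*L*Real.exp (c*β)*(NN I T:ℝ) := by
          apply mul_le_mul_of_nonneg_left h5 (by positivity)
  have hidx : ∀ i : Fin k, 1 ≤ T - k + 1 + (i:ℕ) ∧ T - k + 1 + (i:ℕ) ≤ T := by
    intro i; have := i.isLt; omega
  have heq0 : ∀ I, NN I T = 0 → ∀ t, 1 ≤ t → t ≤ T → w I t = w' I t := by
    intro I h0 t h1 h2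
    have h3 := hNNT I t h1 h2
    rw [h0] at h3
    norm_num at h3
    exact sub_eq_zero.1 h3
  have habs1 : ∀ u v : E, |F u z - F v z| ≤ 1 := by
    intro u v
    have h1 := hrange u z; have h2 := hrange v z
    rw [Set.mem_Icc] at h1 h2
    rw [abs_le]; constructor <;> [linarith [h1.1, h2.2]; linarith [h1.2, h2.1]]
  -- abbreviation for the inner quantity
  set G : (Fin (T + 1) → Fin n) → (Fin k → Bool) → ℝ := fun I m =>
      |F (((1 : ℝ) / k) • ∑ i : Fin k, (if m i then (1 : ℝ) else 0) • w I (T - k + 1 + i)) z -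
        F (((1 : ℝ) / k) • ∑ i : Fin k, (if m i then (1 : ℝ) else 0) • w' I (T - k + 1 + i)) z|
    with hGdef
  have hGN : ∀ I (m : Fin k → Bool), G I m ≤ (NN I T : ℝ) := by
    intro I m
    rcases Nat.eq_zero_or_pos (NN I T) with h0 | h0
    · have hww : ∀ i : Fin k, w I (T-k+1+(i:ℕ)) = w' I (T-k+1+(i:ℕ)) := fun i =>
        heq0 I h0 _ (hidx i).1 (hidx i).2
      rw [h0, hGdef]
      simp only [hww]
      simp
    · exact le_trans (habs1 _ _) (by exact_mod_cast h0)
  have hGL : ∀ I (m : Fin k → Bool),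
      G I m ≤ (L * (2*α*L*Real.exp (c*β)*(NN I T:ℝ)) / k)
        * ∑ i : Fin k, (if m i then (1:ℝ) else 0) := by
    intro I m
    have hD0 : (0:ℝ) ≤ 2*α*L*Real.exp (c*β)*(NN I T:ℝ) := by positivity
    refine le_trans (hLip z _ _) ?_
    have hsub : ((1:ℝ)/k) • (∑ i : Fin k, (if m i then (1:ℝ) else 0) • w I (T-k+1+(i:ℕ)))
        - ((1:ℝ)/k) • (∑ i : Fin k, (if m i then (1:ℝ) else 0) • w' I (T-k+1+(i:ℕ)))
        = ((1:ℝ)/k) • ∑ i : Fin k,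
            (if m i then (1:ℝ) else 0) • (w I (T-k+1+(i:ℕ)) - w' I (T-k+1+(i:ℕ))) := by
      rw [← smul_sub, ← Finset.sum_sub_distrib]
      congr 1
      apply Finset.sum_congr rfl
      intro i _
      rw [smul_sub]
    rw [hsub, norm_smul, Real.norm_eq_abs, abs_of_pos (by positivity : (0:ℝ) < 1/k)]
    have hnorm : ‖∑ i : Fin k, (if m i then (1:ℝ) else 0) • (w I (T-k+1+(i:ℕ)) - w' I (T-k+1+(i:ℕ)))‖
        ≤ ∑ i : Fin k, (if m i then (1:ℝ) else 0) * (2*α*L*Real.exp (c*β)*(NN I T:ℝ)) := by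
      refine le_trans (norm_sum_le _ _) ?_
      apply Finset.sum_le_sum
      intro i _
      rw [norm_smul, Real.norm_eq_abs]
      by_cases hmi : m i
      · simp only [hmi, if_true, abs_one, one_mul]
        exact hNNT I _ (hidx i).1 (hidx i).2
      · simp [hmi]
    calc L * ((1/k) * ‖∑ i : Fin k, (if m i then (1:ℝ) else 0) • (w I (T-k+1+(i:ℕ)) - w' I (T-k+1+(i:ℕ)))‖)
        ≤ L * ((1/k) * (∑ i : Fin k, (if m i then (1:ℝ) else 0) * (2*α*L*Real.exp (c*β)*(NN I T:ℝ)))) := by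
          apply mul_le_mul_of_nonneg_left _ hL.le
          exact mul_le_mul_of_nonneg_left hnorm (by positivity)
      _ = (L * (2*α*L*Real.exp (c*β)*(NN I T:ℝ)) / k) * ∑ i : Fin k, (if m i then (1:ℝ) else 0) := by
          rw [← Finset.sum_mul]
          field_simp
  -- ## mask probability facts
  have hP0 : ∀ (m : Fin k → Bool), 0 ≤ ∏ i, (if m i then s i else 1 - s i) := by
    intro m; apply Finset.prod_nonneg; intro i _
    have := hs i; rw [Set.mem_Icc] at this
    split_ifs <;> linarith [this.1, this.2]
  have hsum_m1 : ∀ I, (∑ m : Fin k → Bool, (∏ i, if m i then s i else 1 - s i) * G I m)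
      ≤ (NN I T : ℝ) := by
    intro I
    calc ∑ m : Fin k → Bool, (∏ i, if m i then s i else 1 - s i) * G I m
        ≤ ∑ m : Fin k → Bool, (∏ i, if m i then s i else 1 - s i) * (NN I T:ℝ) :=
          Finset.sum_le_sum fun m _ => mul_le_mul_of_nonneg_left (hGN I m) (hP0 m)
      _ = (∑ m : Fin k → Bool, (∏ i, if m i then s i else 1 - s i)) * (NN I T:ℝ) := by
          rw [← Finset.sum_mul]
      _ = (NN I T:ℝ) := by rw [sewa_mask_sum_one s, one_mul]
  have hsum_m2 : ∀ I, (∑ m : Fin k → Bool, (∏ i, if m i then s i else 1 - s i) * G I m)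
      ≤ (2*α*L^2*smax*Real.exp (c*β)) * (NN I T : ℝ) := by
    intro I
    calc ∑ m : Fin k → Bool, (∏ i, if m i then s i else 1 - s i) * G I m
        ≤ ∑ m : Fin k → Bool, (∏ i, if m i then s i else 1 - s i) *
            ((L * (2*α*L*Real.exp (c*β)*(NN I T:ℝ)) / k) * ∑ i : Fin k, (if m i then (1:ℝ) else 0)) :=
          Finset.sum_le_sum fun m _ => mul_le_mul_of_nonneg_left (hGL I m) (hP0 m)
      _ = (L * (2*α*L*Real.exp (c*β)*(NN I T:ℝ)) / k) *
            ∑ m : Fin k → Bool, ∑ i : Fin k,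
              (∏ i', if m i' then s i' else 1 - s i') * (if m i then (1:ℝ) else 0) := by
          rw [Finset.mul_sum]
          apply Finset.sum_congr rfl
          intro m _
          rw [← Finset.mul_sum]
          ring
      _ = (L * (2*α*L*Real.exp (c*β)*(NN I T:ℝ)) / k) * ∑ i : Fin k, s i := by
          congr 1
          rw [Finset.sum_comm]
          apply Finset.sum_congr rfl
          intro i _
          exact sewa_mask_marginal s i
      _ ≤ (L * (2*α*L*Real.exp (c*β)*(NN I T:ℝ)) / k) * ((k:ℝ) * smax) := by
          apply mul_le_mul_of_nonneg_left _ (by positivity)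
          calc ∑ i : Fin k, s i ≤ ∑ _i : Fin k, smax := Finset.sum_le_sum fun i _ => hsmax_le i
            _ = (k:ℝ) * smax := by
                rw [Finset.sum_const, Finset.card_univ, Fintype.card_fin, nsmul_eq_mul]
      _ = (2*α*L^2*smax*Real.exp (c*β)) * (NN I T : ℝ) := by
          field_simp
  -- ## averaging over I
  have hsumNN : (∑ I : Fin (T+1) → Fin n, (NN I T : ℝ)) = ((T:ℝ) - 1) * (n:ℝ)^T := by
    have hcast : ∀ I, ((NN I T : ℝ))
        = ∑ τ : Fin (T+1), (if 2 ≤ (τ:ℕ) ∧ (τ:ℕ) ≤ T ∧ I τ = j then (1:ℝ) else 0) := by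
      intro I
      rw [hNNdef]
      push_cast
      apply Finset.sum_congr rfl
      intro τ _
      split_ifs <;> norm_num
    rw [Finset.sum_congr rfl fun I _ => hcast I, Finset.sum_comm]
    have hτ : ∀ τ : Fin (T+1),
        (∑ I : Fin (T+1) → Fin n, if 2 ≤ (τ:ℕ) ∧ (τ:ℕ) ≤ T ∧ I τ = j then (1:ℝ) else 0)
          = if 2 ≤ (τ:ℕ) then (n:ℝ)^T else 0 := by
      intro τ
      have hτT : (τ:ℕ) ≤ T := by omega
      by_cases h2 : 2 ≤ (τ:ℕ)
      · rw [if_pos h2]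
        have hIeq : ∀ I : Fin (T+1) → Fin n,
            (if 2 ≤ (τ:ℕ) ∧ (τ:ℕ) ≤ T ∧ I τ = j then (1:ℝ) else 0)
              = (if I τ = j then (1:ℝ) else 0) := by
          intro I; by_cases hIj : I τ = j <;> simp [hIj, h2, hτT]
        rw [Finset.sum_congr rfl fun I _ => hIeq I, sewa_sum_eval τ j]
        simp
      · rw [if_neg h2]
        apply Finset.sum_eq_zero; intro I _; rw [if_neg]; tauto
    rw [Finset.sum_congr rfl fun τ _ => hτ τ]
    rw [Fin.sum_univ_eq_sum_range (fun t => if 2 ≤ t then (n:ℝ)^T else 0) (T+1)]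
    rw [sewa_sum_range_ite ((n:ℝ)^T) T, Nat.cast_sub hT1]
    push_cast
    ring
  -- ## the two global bounds
  have hpow0 : (0:ℝ) < (n:ℝ)^(T+1) := by positivity
  have main1 : ((1 : ℝ) / (n : ℝ) ^ (T + 1)) *
      (∑ I : Fin (T + 1) → Fin n, ∑ m : Fin k → Bool,
        (∏ i, if m i then s i else 1 - s i) * G I m) ≤ ((T:ℝ) - 1)/n := by
    calc ((1 : ℝ) / (n : ℝ) ^ (T + 1)) *
        (∑ I : Fin (T + 1) → Fin n, ∑ m : Fin k → Bool,
          (∏ i, if m i then s i else 1 - s i) * G I m)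
        ≤ ((1 : ℝ) / (n : ℝ) ^ (T + 1)) * (((T:ℝ) - 1) * (n:ℝ)^T) := by
          apply mul_le_mul_of_nonneg_left _ (by positivity)
          rw [← hsumNN]
          exact Finset.sum_le_sum fun I _ => hsum_m1 I
      _ = ((T:ℝ) - 1)/n := by
          rw [pow_succ]
          field_simp
  have main2 : ((1 : ℝ) / (n : ℝ) ^ (T + 1)) *
      (∑ I : Fin (T + 1) → Fin n, ∑ m : Fin k → Bool,
        (∏ i, if m i then s i else 1 - s i) * G I m)
      ≤ 2*c*smax*L^2*Real.exp (c*β)/n := by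
    have hstep : (∑ I : Fin (T + 1) → Fin n, ∑ m : Fin k → Bool,
        (∏ i, if m i then s i else 1 - s i) * G I m)
        ≤ (2*α*L^2*smax*Real.exp (c*β)) * (((T:ℝ) - 1) * (n:ℝ)^T) := by
      calc (∑ I : Fin (T + 1) → Fin n, ∑ m : Fin k → Bool,
          (∏ i, if m i then s i else 1 - s i) * G I m)
          ≤ ∑ I : Fin (T + 1) → Fin n, (2*α*L^2*smax*Real.exp (c*β)) * (NN I T : ℝ) :=
            Finset.sum_le_sum fun I _ => hsum_m2 I
        _ = (2*α*L^2*smax*Real.exp (c*β)) * (((T:ℝ) - 1) * (n:ℝ)^T) := by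
            rw [← Finset.mul_sum, hsumNN]
    have hα1 : α * ((T:ℝ) - 1) ≤ c := by nlinarith
    calc ((1 : ℝ) / (n : ℝ) ^ (T + 1)) *
        (∑ I : Fin (T + 1) → Fin n, ∑ m : Fin k → Bool,
          (∏ i, if m i then s i else 1 - s i) * G I m)
        ≤ ((1 : ℝ) / (n : ℝ) ^ (T + 1)) *
            ((2*α*L^2*smax*Real.exp (c*β)) * (((T:ℝ) - 1) * (n:ℝ)^T)) := by
          exact mul_le_mul_of_nonneg_left hstep (by positivity)
      _ = (2*L^2*smax*Real.exp (c*β)/n) * (α * ((T:ℝ) - 1)) := by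
          rw [pow_succ]
          field_simp
      _ ≤ (2*L^2*smax*Real.exp (c*β)/n) * c := by
          apply mul_le_mul_of_nonneg_left hα1
          have := Real.exp_pos (c*β)
          positivity
      _ = 2*c*smax*L^2*Real.exp (c*β)/n := by ring
  -- ## final numeric comparison
  set B : ℝ := 2 * c * smax * L ^ 2 * (1 + (k : ℝ) * Real.exp (c * β)) / k with hBdef
  set θ : ℝ := (k:ℝ) / (c*β + (k:ℝ)) with hθdef
  set e : ℝ := c*β / (c*β + (k:ℝ)) with hedef
  have hcβk : (0:ℝ) < c*β + k := by linarith
  have hθpos : 0 < θ := by rw [hθdef]; positivity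
  have hepos : 0 < e := by rw [hedef]; positivity
  have hθe : θ + e = 1 := by rw [hθdef, hedef]; field_simp; ring
  have hB0 : 0 ≤ B := by
    rw [hBdef]
    apply div_nonneg _ hkpos.le
    have he1 : (0:ℝ) ≤ 1 + (k : ℝ) * Real.exp (c * β) := by positivity
    have : (0:ℝ) ≤ 2 * c * smax := by positivity
    positivity
  have hA0 : (0:ℝ) ≤ (1 + 1 / (c * β)) / ((n : ℝ) - 1) := by
    apply div_nonneg (by positivity) (by linarith)
  have hTpow : (1:ℝ) ≤ (T:ℝ) ^ e := by
    calc (1:ℝ) = (1:ℝ) ^ e := (Real.one_rpow e).symm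
      _ ≤ (T:ℝ) ^ e := Real.rpow_le_rpow zero_le_one hT1R hepos.le
  have hmain : ((1 : ℝ) / (n : ℝ) ^ (T + 1)) *
      (∑ I : Fin (T + 1) → Fin n, ∑ m : Fin k → Bool,
        (∏ i, if m i then s i else 1 - s i) * G I m)
      ≤ ((1 + 1 / (c * β)) / ((n : ℝ) - 1)) * B ^ θ * (T : ℝ) ^ e := by
    by_cases hBT : B ≤ (T:ℝ)
    · -- use main2
      have h1 : B ≤ B ^ θ * (T:ℝ) ^ e := by
        rcases eq_or_lt_of_le hB0 with h0 | h0
        · rw [← h0, Real.zero_rpow (ne_of_gt hθpos), zero_mul]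
        · calc B = B ^ θ * B ^ e := by
                rw [← Real.rpow_add h0, hθe, Real.rpow_one]
            _ ≤ B ^ θ * (T:ℝ) ^ e := by
                apply mul_le_mul_of_nonneg_left
                  (Real.rpow_le_rpow h0.le hBT hepos.le) (Real.rpow_nonneg hB0 θ)
      have h2 : 2*c*smax*L^2*Real.exp (c*β)/n ≤ ((1 + 1 / (c * β)) / ((n : ℝ) - 1)) * B := by
        have hbase : (0:ℝ) ≤ 2*c*smax*L^2*Real.exp (c*β) := by positivity
        have hn1 : (0:ℝ) < (n:ℝ) - 1 := by linarith
        have he2 : Real.exp (c*β) ≤ (1 + (k:ℝ)*Real.exp (c*β))/k := by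
          rw [le_div_iff₀ hkpos]
          nlinarith [Real.exp_pos (c*β)]
        have step1 : 2*c*smax*L^2*Real.exp (c*β)/n ≤ 2*c*smax*L^2*Real.exp (c*β)/((n:ℝ)-1) := by
          apply div_le_div_of_nonneg_left hbase hn1 (by linarith)
        have step2 : 2*c*smax*L^2*Real.exp (c*β)/((n:ℝ)-1)
            ≤ ((1 + 1 / (c * β)) / ((n : ℝ) - 1)) * B := by
          rw [hBdef, div_mul_eq_mul_div, div_le_div_iff₀ hn1 hn1]
          have t1 : 2*c*smax*L^2*Real.exp (c*β) ≤ 2*c*smax*L^2*((1 + (k:ℝ)*Real.exp (c*β))/k) := by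
            apply mul_le_mul_of_nonneg_left he2 (by positivity)
          have t2 : 2*c*smax*L^2*((1 + (k:ℝ)*Real.exp (c*β))/k)
              ≤ (1 + 1/(c*β)) * (2*c*smax*L^2*((1 + (k:ℝ)*Real.exp (c*β))/k)) := by
            apply le_mul_of_one_le_left
            · positivity
            · have : 0 < 1/(c*β) := by positivity
              linarith
          have t3 : (1 + 1/(c*β)) * (2*c*smax*L^2*((1 + (k:ℝ)*Real.exp (c*β))/k))
              = (1 + 1/(c*β)) * (2*c*smax*L^2*(1 + (k:ℝ)*Real.exp (c*β))/k) := by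
            ring
          nlinarith [t1, t2, t3, hn1]
        linarith
      calc ((1 : ℝ) / (n : ℝ) ^ (T + 1)) *
          (∑ I : Fin (T + 1) → Fin n, ∑ m : Fin k → Bool,
            (∏ i, if m i then s i else 1 - s i) * G I m)
          ≤ 2*c*smax*L^2*Real.exp (c*β)/n := main2
        _ ≤ ((1 + 1 / (c * β)) / ((n : ℝ) - 1)) * B := h2
        _ ≤ ((1 + 1 / (c * β)) / ((n : ℝ) - 1)) * (B ^ θ * (T:ℝ) ^ e) :=
            mul_le_mul_of_nonneg_left h1 hA0
        _ = ((1 + 1 / (c * β)) / ((n : ℝ) - 1)) * B ^ θ * (T : ℝ) ^ e := by ring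
    · -- use main1
      push_neg at hBT
      have h1 : (T:ℝ) ≤ B ^ θ * (T:ℝ) ^ e := by
        calc (T:ℝ) = (T:ℝ) ^ θ * (T:ℝ) ^ e := by
              rw [← Real.rpow_add hTpos, hθe, Real.rpow_one]
          _ ≤ B ^ θ * (T:ℝ) ^ e := by
              apply mul_le_mul_of_nonneg_right
                (Real.rpow_le_rpow hTpos.le hBT.le hθpos.le) (Real.rpow_nonneg hTpos.le e)
      have h2 : ((T:ℝ) - 1)/n ≤ ((1 + 1 / (c * β)) / ((n : ℝ) - 1)) * (T:ℝ) := by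
        have hn1 : (0:ℝ) < (n:ℝ) - 1 := by linarith
        have s1 : ((T:ℝ) - 1)/n ≤ (T:ℝ)/((n:ℝ)-1) := by
          rw [div_le_div_iff₀ hnpos hn1]
          nlinarith
        have s2 : (T:ℝ)/((n:ℝ)-1) ≤ ((1 + 1 / (c * β)) / ((n : ℝ) - 1)) * (T:ℝ) := by
          rw [div_mul_eq_mul_div, div_le_div_iff₀ hn1 hn1]
          have h9 : 0 < 1/(c*β) := by positivity
          nlinarith [mul_pos (mul_pos h9 hTpos) hn1]
        linarith
      calc ((1 : ℝ) / (n : ℝ) ^ (T + 1)) *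
          (∑ I : Fin (T + 1) → Fin n, ∑ m : Fin k → Bool,
            (∏ i, if m i then s i else 1 - s i) * G I m)
          ≤ ((T:ℝ) - 1)/n := main1
        _ ≤ ((1 + 1 / (c * β)) / ((n : ℝ) - 1)) * (T:ℝ) := h2
        _ ≤ ((1 + 1 / (c * β)) / ((n : ℝ) - 1)) * (B ^ θ * (T:ℝ) ^ e) :=
            mul_le_mul_of_nonneg_left h1 hA0
        _ = ((1 + 1 / (c * β)) / ((n : ℝ) - 1)) * B ^ θ * (T : ℝ) ^ e := by ring
  exact hmain
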